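/- arXiv:2108.12607 — 5 statements merged into one kernel-verified Lean document; each statement's English description precedes it below -/
import Mathlib

section
/- Let P be a probability mass function on a finite alphabet 𝒳 and let X_1,…,X_N be drawn i.i.d. from P, with empirical distribution T. Then for every s > 0, the probability that V(T, P) ≥ s is at most 2^{|𝒳|+1} · e^{−2Ns²}. -/
open MeasureTheory ProbabilityTheory

/-- Total variation distance between two probability mass functions on a
finite alphabet: `V(P,Q) = (1/2) * ∑ a, |P a - Q a|`. -/
noncomputable def tvDist {𝒳 : Type*} [Fintype 𝒳] (P Q : 𝒳 → ℝ) : ℝ :=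
  (1 / 2) * ∑ a, |P a - Q a|

/-- Empirical distribution of a sample `x : Fin N → 𝒳`:
`T a = (1/N) * #{k : x k = a}`. -/
noncomputable def empDist {𝒳 : Type*} [Fintype 𝒳] [DecidableEq 𝒳] {N : ℕ}
    (x : Fin N → 𝒳) : 𝒳 → ℝ :=
  fun a => ((Finset.univ.filter fun k => x k = a).card : ℝ) / N

open scoped Finset

/-! Since `V(T, P) = max_F (T(F) - P(F))`, the event `V(T, P) ≥ s` forces, for one of the
`2^|𝒳|` sets `F`, at least `N (P(F) + s)` samples to fall in `F`. The indicators of `X_k ∈ F` are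
independent Bernoulli variables with mean `P(F)`, hence `1/4`-sub-Gaussian by Hoeffding's lemma,
so Hoeffding's inequality bounds each of these events by `e^{-2Ns²}`; a union bound over `F`
concludes. -/

lemma hasSubgaussianMGF_indicator_sub_measureReal {Ω : Type*} [MeasurableSpace Ω]
    {μ : Measure Ω} [IsProbabilityMeasure μ] {A : Set Ω} (hA : MeasurableSet A) :
    HasSubgaussianMGF (fun ω ↦ A.indicator 1 ω - μ.real A) (1 / 4) μ := by
  have h := hasSubgaussianMGF_of_mem_Icc (μ := μ) (a := 0) (b := 1)
    (measurable_one.indicator hA).aemeasurable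
    (ae_of_all _ fun ω ↦ ⟨Set.indicator_nonneg (fun _ _ ↦ zero_le_one) ω,
      Set.indicator_le_self' (fun _ _ ↦ zero_le_one) ω⟩)
  rw [integral_indicator_one hA] at h
  convert h using 1
  norm_num

lemma measureReal_card_filter_mem_ge_le {Ω α ι : Type*} [MeasurableSpace Ω] [MeasurableSpace α]
    [Fintype ι] {μ : Measure Ω} [IsProbabilityMeasure μ] {X : ι → Ω → α}
    (hmeas : ∀ k, Measurable (X k)) (hindep : iIndepFun X μ) {S : Set α} (hS : MeasurableSet S)
    [DecidablePred (· ∈ S)] {p : ℝ} (hp : ∀ k, μ.real (X k ⁻¹' S) = p) {s : ℝ} (hs : 0 ≤ s) :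
    μ.real {ω | Fintype.card ι * (p + s) ≤ #{k | X k ω ∈ S}} ≤
      Real.exp (-2 * Fintype.card ι * s ^ 2) := by
  have hsubG : ∀ k ∈ (Finset.univ : Finset ι),
      HasSubgaussianMGF (fun ω ↦ S.indicator 1 (X k ω) - p) (1 / 4) μ := by
    intro k _
    have h := hasSubgaussianMGF_indicator_sub_measureReal (μ := μ) (hmeas k hS)
    rw [hp k] at h
    convert h using 3 with ω
    exact (Set.indicator_comp_right (X k) (s := S) (g := 1)).symm
  have hcentered : iIndepFun (fun k ω ↦ S.indicator 1 (X k ω) - p) μ :=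
    hindep.comp (fun _ x ↦ S.indicator (1 : α → ℝ) x - p)
      (fun _ ↦ (measurable_one.indicator hS).sub_const p)
  have hsum : ∀ ω, ∑ k, (S.indicator 1 (X k ω) - p) = #{k | X k ω ∈ S} - Fintype.card ι * p := by
    intro ω
    simp [Finset.sum_sub_distrib, Set.indicator_apply, Finset.sum_boole]
  calc μ.real {ω | Fintype.card ι * (p + s) ≤ #{k | X k ω ∈ S}}
      = μ.real {ω | Fintype.card ι * s ≤ ∑ k, (S.indicator 1 (X k ω) - p)} := by
        congr 1 with ω
        simp only [Set.mem_ofPred_eq, hsum]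
        constructor <;> intro h <;> linarith
    _ ≤ Real.exp (-(Fintype.card ι * s) ^ 2 / (2 * ∑ _k : ι, (1 / 4 : NNReal))) :=
        HasSubgaussianMGF.measure_sum_ge_le_of_iIndepFun hcentered hsubG (by positivity)
    _ = Real.exp (-2 * Fintype.card ι * s ^ 2) := by
        congr 1
        simp only [Finset.sum_const, Finset.card_univ, nsmul_eq_mul]
        push_cast
        rcases eq_or_ne (Fintype.card ι : ℝ) 0 with hn | hn
        · simp [hn]
        · field_simp
          ring

lemma tvDist_eq_sum_filter_le {𝒳 : Type*} [Fintype 𝒳] {T P : 𝒳 → ℝ}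
    (h : ∑ a, T a = ∑ a, P a) :
    tvDist T P = ∑ a with P a ≤ T a, (T a - P a) := by
  have habs := Finset.sum_filter_add_sum_filter_not Finset.univ (fun a ↦ P a ≤ T a)
    fun a ↦ |T a - P a|
  have hdiff := Finset.sum_filter_add_sum_filter_not Finset.univ (fun a ↦ P a ≤ T a)
    fun a ↦ T a - P a
  have hzero : ∑ a, (T a - P a) = 0 := by rw [Finset.sum_sub_distrib, h, sub_self]
  rw [hzero] at hdiff
  rw [Finset.sum_congr rfl fun a ha ↦ abs_of_nonneg (sub_nonneg.2 (Finset.mem_filter.1 ha).2),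
    Finset.sum_congr rfl fun a ha ↦ abs_of_neg (sub_neg.2 (not_le.1 (Finset.mem_filter.1 ha).2)),
    Finset.sum_neg_distrib] at habs
  unfold tvDist
  linarith

lemma sum_empDist {𝒳 : Type*} [Fintype 𝒳] [DecidableEq 𝒳] {N : ℕ} (x : Fin N → 𝒳)
    (F : Finset 𝒳) : ∑ a ∈ F, empDist x a = #{k | x k ∈ F} / N := by
  unfold empDist
  rw [← Finset.sum_div, ← Nat.cast_sum, Finset.sum_card_fiberwise_eq_card_filter]

lemma exists_le_card_filter_mem_of_le_tvDist_empDist {𝒳 : Type*} [Fintype 𝒳] [DecidableEq 𝒳]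
    {N : ℕ} (hN : 0 < N) (x : Fin N → 𝒳) {P : 𝒳 → ℝ} (hP : ∑ a, P a = 1) {s : ℝ}
    (hs : s ≤ tvDist (empDist x) P) :
    ∃ F : Finset 𝒳, N * (∑ a ∈ F, P a + s) ≤ #{k | x k ∈ F} := by
  have hT : ∑ a, empDist x a = ∑ a, P a := by
    rw [hP, sum_empDist, Finset.filter_true_of_mem fun _ _ ↦ Finset.mem_univ _,
      Finset.card_univ, Fintype.card_fin, div_self (by positivity)]
  refine ⟨({a | P a ≤ empDist x a} : Finset 𝒳), ?_⟩
  rw [tvDist_eq_sum_filter_le hT, Finset.sum_sub_distrib, sum_empDist] at hs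
  have hN' : (0 : ℝ) < N := by exact_mod_cast hN
  rw [le_sub_iff_add_le', le_div_iff₀ hN'] at hs
  linarith

theorem stmt_3 {𝒳 : Type*} [Fintype 𝒳] [DecidableEq 𝒳] [MeasurableSpace 𝒳]
    [MeasurableSingletonClass 𝒳]
    {Ω : Type*} [MeasurableSpace Ω] (μ : Measure Ω) [IsProbabilityMeasure μ]
    (P : 𝒳 → ℝ) (hP0 : ∀ a, 0 ≤ P a) (hP1 : ∑ a, P a = 1)
    {N : ℕ} (hN : 0 < N) (X : Fin N → Ω → 𝒳)
    (hmeas : ∀ k, Measurable (X k))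
    (hindep : iIndepFun X μ)
    (hdist : ∀ k a, μ (X k ⁻¹' {a}) = ENNReal.ofReal (P a))
    (s : ℝ) (hs : 0 < s) :
    (μ {ω | s ≤ tvDist (empDist fun k => X k ω) P}).toReal ≤
      2 ^ (Fintype.card 𝒳 + 1) * Real.exp (-2 * N * s ^ 2) := by
  have hprob : ∀ k (F : Finset 𝒳), μ.real (X k ⁻¹' F) = ∑ a ∈ F, P a := fun k F ↦ by
    rw [← sum_measureReal_preimage_singleton F fun a _ ↦ hmeas k (measurableSet_singleton a)]
    simp [measureReal_def, hdist, hP0]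
  calc μ.real {ω | s ≤ tvDist (empDist fun k => X k ω) P}
      ≤ μ.real (⋃ F : Finset 𝒳, {ω | N * (∑ a ∈ F, P a + s) ≤ #{k | X k ω ∈ F}}) :=
        measureReal_mono fun ω hω ↦ Set.mem_iUnion.2
          (exists_le_card_filter_mem_of_le_tvDist_empDist hN _ hP1 hω)
    _ ≤ ∑ F : Finset 𝒳, μ.real {ω | N * (∑ a ∈ F, P a + s) ≤ #{k | X k ω ∈ F}} :=
        measureReal_iUnion_fintype_le _
    _ ≤ ∑ _F : Finset 𝒳, Real.exp (-2 * N * s ^ 2) := Finset.sum_le_sum fun F _ ↦ by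
        simpa using measureReal_card_filter_mem_ge_le hmeas hindep F.measurableSet (hprob · F)
          hs.le
    _ ≤ 2 ^ (Fintype.card 𝒳 + 1) * Real.exp (-2 * N * s ^ 2) := by
        rw [Finset.sum_const, Finset.card_univ, Fintype.card_finset, nsmul_eq_mul]
        push_cast
        gcongr
        · norm_num
        · omega
end

section
/- Let P be a probability mass function on a finite alphabet 𝒳 with |𝒳| ≥ 1, and let X_1,…,X_N be drawn i.i.d. from P, with empirical distribution T. Then for every s > 0, the probability that V(T, P) ≥ s is at most 2|𝒳| · exp(−8Ns²/|𝒳|²). -/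
/-!
If `V(T, P) ≥ s`, the pigeonhole principle gives a letter `a` with `|T a - P a| ≥ 2s/|𝒳|`.
For fixed `a`, `N (T a - P a)` is a sum of `N` independent centred indicators, so by Hoeffding's
inequality each of the two tails has probability at most `exp(-2N (2s/|𝒳|)²)`; a union bound over
the `2|𝒳|` tails gives the claim.
-/

open MeasureTheory ProbabilityTheory

open Finset Real
open scoped NNReal

lemma exists_le_abs_sub_of_le_tvDist {𝒳 : Type*} [Fintype 𝒳] [Nonempty 𝒳] {P Q : 𝒳 → ℝ}
    {s : ℝ} (h : s ≤ tvDist Q P) : ∃ a, 2 * s / Fintype.card 𝒳 ≤ |Q a - P a| := by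
  have hcard : (0 : ℝ) < Fintype.card 𝒳 := by exact_mod_cast Fintype.card_pos
  obtain ⟨a, -, ha⟩ := exists_le_of_sum_le univ_nonempty
    (f := fun _ => 2 * s / Fintype.card 𝒳) (g := fun a => |Q a - P a|) (by
      rw [sum_const, card_univ, nsmul_eq_mul, mul_div_cancel₀ _ hcard.ne']
      unfold tvDist at h
      linarith)
  exact ⟨a, ha⟩

section Hoeffding

variable {Ω ι : Type*} [MeasurableSpace Ω] {μ : Measure Ω} [IsProbabilityMeasure μ]

lemma measureReal_abs_sum_sub_integral_ge_le_of_iIndepFun {Y : ι → Ω → ℝ} (hindep : iIndepFun Y μ)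
    (hY : ∀ i, AEMeasurable (Y i) μ) {a b : ℝ} (hab : ∀ i, ∀ᵐ ω ∂μ, Y i ω ∈ Set.Icc a b)
    (s : Finset ι) {ε : ℝ} (hε : 0 ≤ ε) :
    μ.real {ω | ε ≤ |∑ i ∈ s, (Y i ω - μ[Y i])|} ≤
      2 * exp (-2 * ε ^ 2 / (#s * (b - a) ^ 2)) := by
  set Z : ι → Ω → ℝ := fun i ω => Y i ω - μ[Y i]
  have hZ : ∀ i ∈ s, HasSubgaussianMGF (Z i) ((‖b - a‖₊ / 2) ^ 2) μ :=
    fun i _ => hasSubgaussianMGF_of_mem_Icc (hY i) (hab i)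
  have hZindep : iIndepFun Z μ := by
    have := hindep.comp (fun i (y : ℝ) => y - μ[Y i]) fun _ => measurable_id.sub_const _
    exact this
  have hnegZindep : iIndepFun (fun i => -Z i) μ :=
    hZindep.comp (fun _ y => -y) (fun _ => measurable_neg)
  have hexp : exp (-ε ^ 2 / (2 * ∑ i ∈ s, ((‖b - a‖₊ / 2) ^ 2 : ℝ≥0))) =
      exp (-2 * ε ^ 2 / (#s * (b - a) ^ 2)) := by
    congr 1
    push_cast
    rw [sum_const, nsmul_eq_mul, Real.norm_eq_abs, div_pow, sq_abs,
      show 2 * (#s * ((b - a) ^ 2 / 2 ^ 2)) = #s * (b - a) ^ 2 / 2 by ring, div_div_eq_mul_div]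
    ring
  calc μ.real {ω | ε ≤ |∑ i ∈ s, Z i ω|}
      ≤ μ.real ({ω | ε ≤ ∑ i ∈ s, Z i ω} ∪ {ω | ε ≤ ∑ i ∈ s, -Z i ω}) := by
        refine measureReal_mono fun ω hω => ?_
        rw [Set.mem_ofPred_eq, le_abs, ← sum_neg_distrib] at hω
        exact hω
    _ ≤ μ.real {ω | ε ≤ ∑ i ∈ s, Z i ω} + μ.real {ω | ε ≤ ∑ i ∈ s, -Z i ω} :=
        measureReal_union_le _ _
    _ ≤ 2 * exp (-2 * ε ^ 2 / (#s * (b - a) ^ 2)) := by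
        rw [two_mul, ← hexp]
        exact add_le_add (HasSubgaussianMGF.measure_sum_ge_le_of_iIndepFun hZindep hZ hε)
          (HasSubgaussianMGF.measure_sum_ge_le_of_iIndepFun hnegZindep
            (fun i hi => (hZ i hi).neg) hε)

end Hoeffding

section Empirical

variable {𝒳 Ω : Type*} [Fintype 𝒳] [DecidableEq 𝒳] {N : ℕ}

lemma sum_ite_sub_eq_mul_empDist_sub (hN : 0 < N) (x : Fin N → 𝒳) (a : 𝒳) (p : ℝ) :
    ∑ k, ((if x k = a then 1 else 0) - p) = N * (empDist x a - p) := by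
  rw [sum_sub_distrib, sum_boole, sum_const, card_univ, Fintype.card_fin, nsmul_eq_mul, mul_sub,
    empDist, mul_div_cancel₀ _ (by positivity)]

lemma measureReal_abs_empDist_sub_ge_le [MeasurableSpace 𝒳] [MeasurableSingletonClass 𝒳]
    [MeasurableSpace Ω] {μ : Measure Ω} [IsProbabilityMeasure μ] (hN : 0 < N)
    {X : Fin N → Ω → 𝒳} (hmeas : ∀ k, Measurable (X k)) (hindep : iIndepFun X μ) {a : 𝒳}
    {p : ℝ} (hp : ∀ k, μ.real (X k ⁻¹' {a}) = p) {t : ℝ} (ht : 0 ≤ t) :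
    μ.real {ω | t ≤ |empDist (fun k => X k ω) a - p|} ≤ 2 * exp (-2 * N * t ^ 2) := by
  set Y : Fin N → Ω → ℝ := fun k => (X k ⁻¹' {a}).indicator 1
  have hYindep : iIndepFun Y μ := by
    have := hindep.comp (fun _ => ({a} : Set 𝒳).indicator (1 : 𝒳 → ℝ))
      fun _ => measurable_one.indicator (measurableSet_singleton a)
    exact this
  have hYmean : ∀ k, μ[Y k] = p := fun k => by
    rw [integral_indicator_one (hmeas k (measurableSet_singleton a)), hp]
  have hYmem : ∀ k, ∀ᵐ ω ∂μ, Y k ω ∈ Set.Icc (0 : ℝ) 1 := fun k =>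
    ae_of_all _ fun ω => by by_cases h : X k ω = a <;> simp [Y, h]
  have hsum : ∀ ω, ∑ k, (Y k ω - μ[Y k]) = N * (empDist (fun k => X k ω) a - p) := fun ω => by
    rw [← sum_ite_sub_eq_mul_empDist_sub hN]
    refine sum_congr rfl fun k _ => ?_
    by_cases h : X k ω = a <;> simp [Y, h, hYmean]
  calc μ.real {ω | t ≤ |empDist (fun k => X k ω) a - p|}
      ≤ μ.real {ω | N * t ≤ |∑ k, (Y k ω - μ[Y k])|} := by
        refine measureReal_mono fun ω hω => ?_
        rw [Set.mem_ofPred_eq, hsum, abs_mul, Nat.abs_cast]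
        exact mul_le_mul_of_nonneg_left hω N.cast_nonneg
    _ ≤ 2 * exp (-2 * (N * t) ^ 2 / (#univ * (1 - 0) ^ 2)) :=
        measureReal_abs_sum_sub_integral_ge_le_of_iIndepFun hYindep
          (fun k => (measurable_one.indicator (hmeas k (measurableSet_singleton a))).aemeasurable)
          hYmem _ (by positivity)
    _ = 2 * exp (-2 * N * t ^ 2) := by
        have hexp : -2 * (N * t) ^ 2 / (#(univ : Finset (Fin N)) * (1 - 0) ^ 2) =
            -2 * N * t ^ 2 := by
          rw [card_univ, Fintype.card_fin, sub_zero, one_pow, mul_one]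
          field_simp
        rw [hexp]

end Empirical

theorem stmt_5_general {𝒳 : Type*} [Fintype 𝒳] [DecidableEq 𝒳] [MeasurableSpace 𝒳]
    [MeasurableSingletonClass 𝒳] (hX : 1 ≤ Fintype.card 𝒳)
    {Ω : Type*} [MeasurableSpace Ω] (μ : Measure Ω) [IsProbabilityMeasure μ]
    (P : 𝒳 → ℝ) (hP0 : ∀ a, 0 ≤ P a)
    {N : ℕ} (hN : 0 < N) (X : Fin N → Ω → 𝒳)
    (hmeas : ∀ k, Measurable (X k))
    (hindep : iIndepFun X μ)
    (hdist : ∀ k a, μ (X k ⁻¹' {a}) = ENNReal.ofReal (P a))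
    (s : ℝ) (hs : 0 < s) :
    (μ {ω | s ≤ tvDist (empDist fun k => X k ω) P}).toReal ≤
      2 * (Fintype.card 𝒳 : ℝ) * Real.exp (-8 * N * s ^ 2 / (Fintype.card 𝒳 : ℝ) ^ 2) := by
  have : Nonempty 𝒳 := Fintype.card_pos_iff.mp hX
  have hP : ∀ k a, μ.real (X k ⁻¹' {a}) = P a := fun k a => by
    rw [measureReal_def, hdist, ENNReal.toReal_ofReal (hP0 a)]
  set t := 2 * s / Fintype.card 𝒳
  calc μ.real {ω | s ≤ tvDist (empDist fun k => X k ω) P}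
      ≤ μ.real (⋃ a, {ω | t ≤ |empDist (fun k => X k ω) a - P a|}) :=
        measureReal_mono fun ω hω => Set.mem_iUnion.2 (exists_le_abs_sub_of_le_tvDist hω)
    _ ≤ ∑ a, μ.real {ω | t ≤ |empDist (fun k => X k ω) a - P a|} :=
        measureReal_iUnion_fintype_le _
    _ ≤ ∑ _a : 𝒳, 2 * exp (-2 * N * t ^ 2) :=
        sum_le_sum fun a _ => measureReal_abs_empDist_sub_ge_le hN hmeas hindep (hP · a)
          (by positivity)
    _ = 2 * Fintype.card 𝒳 * exp (-8 * N * s ^ 2 / (Fintype.card 𝒳) ^ 2) := by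
        have hexp : -2 * N * t ^ 2 = -8 * N * s ^ 2 / (Fintype.card 𝒳) ^ 2 := by
          simp only [t]
          ring
        rw [sum_const, card_univ, nsmul_eq_mul, hexp]
        ring

theorem stmt_5 {𝒳 : Type*} [Fintype 𝒳] [DecidableEq 𝒳] [MeasurableSpace 𝒳]
    [MeasurableSingletonClass 𝒳] (hX : 1 ≤ Fintype.card 𝒳)
    {Ω : Type*} [MeasurableSpace Ω] (μ : Measure Ω) [IsProbabilityMeasure μ]
    (P : 𝒳 → ℝ) (hP0 : ∀ a, 0 ≤ P a) (hP1 : ∑ a, P a = 1)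
    {N : ℕ} (hN : 0 < N) (X : Fin N → Ω → 𝒳)
    (hmeas : ∀ k, Measurable (X k))
    (hindep : iIndepFun X μ)
    (hdist : ∀ k a, μ (X k ⁻¹' {a}) = ENNReal.ofReal (P a))
    (s : ℝ) (hs : 0 < s) :
    (μ {ω | s ≤ tvDist (empDist fun k => X k ω) P}).toReal ≤
      2 * (Fintype.card 𝒳 : ℝ) * Real.exp (-8 * N * s ^ 2 / (Fintype.card 𝒳 : ℝ) ^ 2) :=
  stmt_5_general hX μ P hP0 hN X hmeas hindep hdist s hs
end

section
/- Let P and Q be probability mass functions on a finite alphabet 𝒳. Then the Chernoff distance satisfies C(P,Q) ≥ −(1/2)·log₂(1 − V(P,Q)²). -/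
/-- Chernoff distance: `C(P,Q) = - min_{λ ∈ [0,1]} log₂ (∑ a, P a ^ λ * Q a ^ (1-λ))`,
with the real power convention `0 ^ 0 = 1`. -/
noncomputable def chernoffDist {𝒳 : Type*} [Fintype 𝒳] (P Q : 𝒳 → ℝ) : ℝ :=
  - sInf ((fun lam : ℝ => Real.logb 2 (∑ a, P a ^ lam * Q a ^ (1 - lam))) '' Set.Icc 0 1)

lemma rpow_split (x l : ℝ) (hx : 0 ≤ x) : x ^ l * x ^ (1 - l) = x := by
  rcases hx.lt_or_eq with h | h
  · rw [← Real.rpow_add h]; simp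
  · rw [← h]
    rcases eq_or_ne l 0 with hl | hl
    · simp [hl]
    · rw [Real.zero_rpow hl, zero_mul]

theorem stmt_9 {𝒳 : Type*} [Fintype 𝒳] (P Q : 𝒳 → ℝ)
    (hP0 : ∀ a, 0 ≤ P a) (hP1 : ∑ a, P a = 1)
    (hQ0 : ∀ a, 0 ≤ Q a) (hQ1 : ∑ a, Q a = 1) :
    chernoffDist P Q ≥ -(1 / 2) * Real.logb 2 (1 - tvDist P Q ^ 2) := by
  classical
  set V := tvDist P Q with hV
  set S : ℝ → ℝ := fun l => ∑ a, P a ^ l * Q a ^ (1 - l) with hS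
  set B : ℝ := ∑ a, Real.sqrt (P a * Q a) with hB
  have hB0 : 0 ≤ B := Finset.sum_nonneg fun a _ => Real.sqrt_nonneg _
  -- S l ≤ 1 for l ∈ [0,1]
  have hSle1 : ∀ l ∈ Set.Icc (0:ℝ) 1, S l ≤ 1 := by
    intro l hl
    calc S l ≤ ∑ a, (l * P a + (1 - l) * Q a) := by
          refine Finset.sum_le_sum fun a _ => ?_
          exact Real.geom_mean_le_arith_mean2_weighted hl.1 (by linarith [hl.2])
            (hP0 a) (hQ0 a) (by ring)
      _ = 1 := by
          rw [Finset.sum_add_distrib, ← Finset.mul_sum, ← Finset.mul_sum, hP1, hQ1]; ring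
  have hS0 : ∀ l : ℝ, 0 ≤ S l := fun l =>
    Finset.sum_nonneg fun a _ => mul_nonneg (Real.rpow_nonneg (hP0 a) _)
      (Real.rpow_nonneg (hQ0 a) _)
  -- B^2 ≤ S l * S (1 - l) ≤ S l for l ∈ [0,1]
  have hSge : ∀ l ∈ Set.Icc (0:ℝ) 1, B ^ 2 ≤ S l := by
    intro l hl
    have hcs : B ^ 2 ≤ S l * S (1 - l) := by
      refine Finset.sum_sq_le_sum_mul_sum_of_sq_eq_mul _
        (fun a _ => mul_nonneg (Real.rpow_nonneg (hP0 a) _) (Real.rpow_nonneg (hQ0 a) _))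
        (fun a _ => mul_nonneg (Real.rpow_nonneg (hP0 a) _) (Real.rpow_nonneg (hQ0 a) _))
        (fun a _ => ?_)
      rw [Real.sq_sqrt (mul_nonneg (hP0 a) (hQ0 a))]
      have h1 : P a ^ l * Q a ^ (1 - l) * (P a ^ (1 - l) * Q a ^ (1 - (1 - l)))
          = (P a ^ l * P a ^ (1 - l)) * (Q a ^ (1 - l) * Q a ^ (1 - (1 - l))) := by ring
      rw [h1, rpow_split _ _ (hP0 a)]
      have h2 : (1 : ℝ) - (1 - l) = 1 - (1 - l) := rfl
      have := rpow_split (Q a) (1 - l) (hQ0 a)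
      rw [this]
    calc B ^ 2 ≤ S l * S (1 - l) := hcs
      _ ≤ S l * 1 := by
          refine mul_le_mul_of_nonneg_left (hSle1 (1 - l) ?_) (hS0 l)
          constructor <;> [linarith [hl.2]; linarith [hl.1]]
      _ = S l := mul_one _
  -- B^2 ≤ 1 - V^2
  have hminmax : ∀ a, min (P a) (Q a) + max (P a) (Q a) = P a + Q a := fun a => min_add_max _ _
  have habs : ∀ a, max (P a) (Q a) - min (P a) (Q a) = |P a - Q a| := fun a => by
    rw [max_sub_min_eq_abs, abs_sub_comm]
  have hsummin : ∑ a, min (P a) (Q a) = 1 - V := by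
    have h1 : ∑ a, (min (P a) (Q a) + max (P a) (Q a)) = 2 := by
      simp_rw [hminmax]; rw [Finset.sum_add_distrib, hP1, hQ1]; norm_num
    have h2 : ∑ a, (max (P a) (Q a) - min (P a) (Q a)) = 2 * V := by
      simp_rw [habs]; rw [hV]; unfold tvDist; ring
    rw [Finset.sum_add_distrib] at h1
    rw [Finset.sum_sub_distrib] at h2
    linarith
  have hsummax : ∑ a, max (P a) (Q a) = 1 + V := by
    have h1 : ∑ a, (min (P a) (Q a) + max (P a) (Q a)) = 2 := by
      simp_rw [hminmax]; rw [Finset.sum_add_distrib, hP1, hQ1]; norm_num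
    rw [Finset.sum_add_distrib, hsummin] at h1
    linarith
  have hBV : B ^ 2 ≤ 1 - V ^ 2 := by
    have hcs : B ^ 2 ≤ (∑ a, min (P a) (Q a)) * ∑ a, max (P a) (Q a) := by
      refine Finset.sum_sq_le_sum_mul_sum_of_sq_eq_mul _
        (fun a _ => le_min (hP0 a) (hQ0 a))
        (fun a _ => le_max_of_le_left (hP0 a))
        (fun a _ => ?_)
      rw [Real.sq_sqrt (mul_nonneg (hP0 a) (hQ0 a)), min_mul_max]
    rw [hsummin, hsummax] at hcs
    nlinarith [hcs]
  rcases hB0.lt_or_eq with hBpos | hBzero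
  · -- B > 0
    have h1V : 0 < 1 - V ^ 2 := lt_of_lt_of_le (pow_pos hBpos 2) hBV
    have hbdd : BddBelow ((fun l : ℝ => Real.logb 2 (S l)) '' Set.Icc 0 1) := by
      refine ⟨Real.logb 2 (B ^ 2), ?_⟩
      rintro y ⟨l, hl, rfl⟩
      exact Real.logb_le_logb_of_le (by norm_num) (pow_pos hBpos 2) (hSge l hl)
    have hmem : Real.logb 2 B ∈ ((fun l : ℝ => Real.logb 2 (S l)) '' Set.Icc 0 1) := by
      refine ⟨1/2, ⟨by norm_num, by norm_num⟩, ?_⟩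
      have : S (1/2) = B := by
        rw [hS, hB]
        refine Finset.sum_congr rfl fun a _ => ?_
        rw [Real.sqrt_mul (hP0 a), Real.sqrt_eq_rpow, Real.sqrt_eq_rpow]
        norm_num
      show Real.logb 2 (S (1/2)) = Real.logb 2 B
      rw [this]
    have hsinf : sInf ((fun l : ℝ => Real.logb 2 (S l)) '' Set.Icc 0 1) ≤ Real.logb 2 B :=
      csInf_le hbdd hmem
    have hlog : Real.logb 2 B ≤ (1 / 2) * Real.logb 2 (1 - V ^ 2) := by
      have h2 : Real.logb 2 (B ^ 2) ≤ Real.logb 2 (1 - V ^ 2) :=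
        Real.logb_le_logb_of_le (by norm_num) (pow_pos hBpos 2) hBV
      rw [Real.logb_pow] at h2
      push_cast at h2
      linarith
    show -sInf _ ≥ _
    have : sInf ((fun l : ℝ => Real.logb 2 (S l)) '' Set.Icc 0 1)
        ≤ (1 / 2) * Real.logb 2 (1 - V ^ 2) := le_trans hsinf hlog
    linarith
  · -- B = 0 : disjoint supports
    have hPQ : ∀ a, P a * Q a = 0 := by
      intro a
      have := (Finset.sum_eq_zero_iff_of_nonneg
        (fun a _ => Real.sqrt_nonneg (P a * Q a))).1 hBzero.symm a (Finset.mem_univ a)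
      exact (Real.sqrt_eq_zero (mul_nonneg (hP0 a) (hQ0 a))).1 this
    have hVone : V = 1 := by
      have habs2 : ∀ a, |P a - Q a| = P a + Q a := by
        intro a
        rcases mul_eq_zero.1 (hPQ a) with h | h
        · rw [h, zero_sub, abs_neg, abs_of_nonneg (hQ0 a), zero_add]
        · rw [h, sub_zero, abs_of_nonneg (hP0 a), add_zero]
      rw [hV]; unfold tvDist
      simp_rw [habs2]
      rw [Finset.sum_add_distrib, hP1, hQ1]; norm_num
    have himg : ((fun l : ℝ => Real.logb 2 (S l)) '' Set.Icc 0 1) = {0} := by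
      apply Set.eq_singleton_iff_nonempty_unique_mem.2
      constructor
      · refine ⟨Real.logb 2 (S 0), ⟨0, ⟨le_refl _, by norm_num⟩, rfl⟩⟩
      · rintro y ⟨l, hl, rfl⟩
        rcases eq_or_ne l 0 with h0 | h0
        · subst h0
          have : S 0 = 1 := by
            rw [hS]; simp only [Real.rpow_zero, one_mul, sub_zero, Real.rpow_one]; exact hQ1
          simp [this]
        rcases eq_or_ne l 1 with h1 | h1
        · subst h1
          have : S 1 = 1 := by
            rw [hS]; simp only [Real.rpow_one, sub_self, Real.rpow_zero, mul_one]; exact hP1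
          simp [this]
        · have hSz : S l = 0 := by
            rw [hS]
            refine Finset.sum_eq_zero fun a _ => ?_
            rcases mul_eq_zero.1 (hPQ a) with h | h
            · rw [h, Real.zero_rpow h0, zero_mul]
            · rw [h, Real.zero_rpow (sub_ne_zero.2 (Ne.symm h1)), mul_zero]
          simp [hSz]
    have hRHS : 1 - V ^ 2 = 0 := by rw [hVone]; ring
    show -sInf _ ≥ _
    rw [himg, hRHS]
    simp
end

section
/- Let P and Q be probability mass functions on a finite alphabet 𝒳 with V(P,Q) < 1. Then V(P,Q)²/2 ≤ −(1/2)·ln(1 − V(P,Q)²) ≤ C(P,Q) · ln 2. -/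
theorem stmt_10 {𝒳 : Type*} [Fintype 𝒳] (P Q : 𝒳 → ℝ)
    (hP0 : ∀ a, 0 ≤ P a) (hP1 : ∑ a, P a = 1)
    (hQ0 : ∀ a, 0 ≤ Q a) (hQ1 : ∑ a, Q a = 1)
    (hV : tvDist P Q < 1) :
    tvDist P Q ^ 2 / 2 ≤ -(1 / 2) * Real.log (1 - tvDist P Q ^ 2) ∧
      -(1 / 2) * Real.log (1 - tvDist P Q ^ 2) ≤ chernoffDist P Q * Real.log 2 := by
  set V := tvDist P Q with hVdef
  have hV0 : 0 ≤ V := by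
    rw [hVdef, tvDist]
    positivity
  have hx : 0 < 1 - V ^ 2 := by nlinarith
  have h1 : V ^ 2 / 2 ≤ -(1 / 2) * Real.log (1 - V ^ 2) := by
    have := Real.log_le_sub_one_of_pos hx
    nlinarith
  refine ⟨h1, ?_⟩
  -- Bhattacharyya coefficient
  set B : ℝ := ∑ a, Real.sqrt (P a) * Real.sqrt (Q a) with hBdef
  -- Cauchy–Schwarz : (2V)^2 ≤ (2 - 2B)(2 + 2B)
  have hsq : ∀ a, Real.sqrt (P a) ^ 2 = P a := fun a => Real.sq_sqrt (hP0 a)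
  have hsq' : ∀ a, Real.sqrt (Q a) ^ 2 = Q a := fun a => Real.sq_sqrt (hQ0 a)
  have hCS := Finset.sum_mul_sq_le_sq_mul_sq Finset.univ
    (fun a => |Real.sqrt (P a) - Real.sqrt (Q a)|)
    (fun a => Real.sqrt (P a) + Real.sqrt (Q a))
  have e1 : ∑ a, |Real.sqrt (P a) - Real.sqrt (Q a)| * (Real.sqrt (P a) + Real.sqrt (Q a))
      = ∑ a, |P a - Q a| := by
    refine Finset.sum_congr rfl fun a _ => ?_
    have hnn : 0 ≤ Real.sqrt (P a) + Real.sqrt (Q a) := by positivity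
    rw [← abs_of_nonneg hnn, ← abs_mul]
    congr 1
    nlinarith [hsq a, hsq' a]
  have e2 : ∑ a, |Real.sqrt (P a) - Real.sqrt (Q a)| ^ 2 = 2 - 2 * B := by
    have : ∀ a, |Real.sqrt (P a) - Real.sqrt (Q a)| ^ 2
        = P a + Q a - 2 * (Real.sqrt (P a) * Real.sqrt (Q a)) := by
      intro a; rw [sq_abs]; nlinarith [hsq a, hsq' a]
    simp only [this]
    rw [hBdef]
    rw [Finset.sum_sub_distrib, Finset.sum_add_distrib, hP1, hQ1, ← Finset.mul_sum]
    ring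
  have e3 : ∑ a, (Real.sqrt (P a) + Real.sqrt (Q a)) ^ 2 = 2 + 2 * B := by
    have : ∀ a, (Real.sqrt (P a) + Real.sqrt (Q a)) ^ 2
        = P a + Q a + 2 * (Real.sqrt (P a) * Real.sqrt (Q a)) := by
      intro a; nlinarith [hsq a, hsq' a]
    simp only [this]
    rw [hBdef, Finset.sum_add_distrib, Finset.sum_add_distrib, hP1, hQ1, ← Finset.mul_sum]
    ring
  have hsum : ∑ a, |P a - Q a| = 2 * V := by rw [hVdef, tvDist]; ring
  rw [e1, e2, e3, hsum] at hCS
  have hkey : V ^ 2 + B ^ 2 ≤ 1 := by nlinarith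
  -- there is a point where both are positive
  obtain ⟨a0, hPa0, hQa0⟩ : ∃ a, 0 < P a ∧ 0 < Q a := by
    by_contra hcon
    push_neg at hcon
    have : ∀ a, |P a - Q a| = P a + Q a := by
      intro a
      rcases lt_or_ge 0 (P a) with h | h
      · have hq : Q a ≤ 0 := hcon a h
        have hq0 : Q a = 0 := le_antisymm hq (hQ0 a)
        rw [hq0, sub_zero, abs_of_nonneg (hP0 a)]; ring
      · have hp0 : P a = 0 := le_antisymm h (hP0 a)
        rw [hp0, zero_sub, abs_neg, abs_of_nonneg (hQ0 a)]; ring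
    have : ∑ a, |P a - Q a| = 2 := by
      rw [Finset.sum_congr rfl fun a _ => this a, Finset.sum_add_distrib, hP1, hQ1]; norm_num
    rw [this] at hsum
    linarith
  set m : ℝ := min (P a0) (Q a0) with hmdef
  have hm : 0 < m := lt_min hPa0 hQa0
  -- lower bound for the sums
  have hlow : ∀ lam ∈ Set.Icc (0:ℝ) 1, m ≤ ∑ a, P a ^ lam * Q a ^ (1 - lam) := by
    rintro lam ⟨h0, h1'⟩
    have hterm : m ≤ P a0 ^ lam * Q a0 ^ (1 - lam) := by
      have h1 : m ^ lam ≤ P a0 ^ lam :=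
        Real.rpow_le_rpow hm.le (min_le_left _ _) h0
      have h2 : m ^ (1 - lam) ≤ Q a0 ^ (1 - lam) :=
        Real.rpow_le_rpow hm.le (min_le_right _ _) (by linarith)
      have h3 : m ^ lam * m ^ (1 - lam) = m := by
        rw [← Real.rpow_add hm]; norm_num
      calc m = m ^ lam * m ^ (1 - lam) := h3.symm
        _ ≤ P a0 ^ lam * Q a0 ^ (1 - lam) := by
            apply mul_le_mul h1 h2 (Real.rpow_nonneg hm.le _)
            exact Real.rpow_nonneg (hP0 a0) _
    calc m ≤ P a0 ^ lam * Q a0 ^ (1 - lam) := hterm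
      _ ≤ ∑ a, P a ^ lam * Q a ^ (1 - lam) := by
          apply Finset.single_le_sum (f := fun a => P a ^ lam * Q a ^ (1 - lam))
            (fun a _ => mul_nonneg (Real.rpow_nonneg (hP0 a) _) (Real.rpow_nonneg (hQ0 a) _))
            (Finset.mem_univ a0)
  set S := ((fun lam : ℝ => Real.logb 2 (∑ a, P a ^ lam * Q a ^ (1 - lam))) '' Set.Icc 0 1)
    with hSdef
  have hbdd : BddBelow S := by
    refine ⟨Real.logb 2 m, ?_⟩
    rintro y ⟨lam, hlam, rfl⟩
    exact Real.logb_le_logb_of_le (by norm_num) hm (hlow lam hlam)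
  have hB2 : (∑ a, P a ^ ((1:ℝ)/2) * Q a ^ (1 - (1:ℝ)/2)) = B := by
    rw [hBdef]
    refine Finset.sum_congr rfl fun a _ => ?_
    rw [Real.sqrt_eq_rpow, Real.sqrt_eq_rpow]
    norm_num
  have hmem : Real.logb 2 B ∈ S := by
    refine ⟨1/2, ⟨by norm_num, by norm_num⟩, ?_⟩
    simp only [hB2]
  have hinf : sInf S ≤ Real.logb 2 B := csInf_le hbdd hmem
  have hBpos : 0 < B := lt_of_lt_of_le hm (by rw [← hB2]; exact hlow _ ⟨by norm_num, by norm_num⟩)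
  have hlog2 : (0:ℝ) < Real.log 2 := Real.log_pos (by norm_num)
  have hCh : chernoffDist P Q * Real.log 2 ≥ - Real.log B := by
    rw [chernoffDist, ← hSdef]
    have : sInf S * Real.log 2 ≤ Real.log B := by
      have := mul_le_mul_of_nonneg_right hinf hlog2.le
      rwa [Real.logb, div_mul_cancel₀ _ (ne_of_gt hlog2)] at this
    linarith
  refine le_trans ?_ hCh
  -- -(1/2) log (1 - V^2) ≤ - log B since B^2 ≤ 1 - V^2
  have hB2le : B ^ 2 ≤ 1 - V ^ 2 := by nlinarith
  have hlogB : Real.log (B ^ 2) ≤ Real.log (1 - V ^ 2) :=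
    Real.log_le_log (by positivity) hB2le
  rw [Real.log_pow] at hlogB
  push_cast at hlogB
  linarith
end

section
/- Consider the DGL-based classification setup with M ≥ 2 hypotheses over a finite alphabet 𝒳, test sequence length n, and training sequence length N = nα for α > 0, where the true source distributions P_1,…,P_M satisfy min_{i ≠ j} V(P_i, P_j) > 0. Then the classification error probability satisfies Pr[e_CL] ≤ 2M · exp(−n( α (min_{i ≠ j} V(P_i, P_j))² / (2(2 + √α)²) − max{ 2·ln(M−1)/n , |𝒳|·ln 2 / n } )). -/
open MeasureTheory ProbabilityTheory

/-- Minimum of `tvDist (Q i) (Q j)` over all ordered pairs of distinct indices. -/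
noncomputable def minPairTV {𝒳 : Type*} [Fintype 𝒳] {M : ℕ} (Q : Fin M → 𝒳 → ℝ) : ℝ :=
  sInf {x | ∃ i j : Fin M, i ≠ j ∧ x = tvDist (Q i) (Q j)}

/-- The DGL statistic of hypothesis `i`: the maximum over the sets
`A_{p,q} = {a : T q a ≤ T p a}` (for `p < q`) of `|T_i(A) - ν(A)|`. -/
noncomputable def dglScore {𝒳 : Type*} [Fintype 𝒳] {M : ℕ}
    (T : Fin M → 𝒳 → ℝ) (ν : 𝒳 → ℝ) (i : Fin M) : ℝ :=
  sSup {x | ∃ p q : Fin M, p < q ∧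
    x = |(∑ a ∈ Finset.univ.filter fun a => T q a ≤ T p a, T i a) -
         (∑ a ∈ Finset.univ.filter fun a => T q a ≤ T p a, ν a)|}

/-- The DGL test: accept the smallest hypothesis index minimizing the DGL statistic. -/
noncomputable def dglClassify {𝒳 : Type*} [Fintype 𝒳] {M : ℕ} (hM : 0 < M)
    (T : Fin M → 𝒳 → ℝ) (ν : 𝒳 → ℝ) : Fin M :=
  (Finset.univ.filter fun i => ∀ j, dglScore T ν i ≤ dglScore T ν j).min' (by
    obtain ⟨i, -, hi⟩ := Finset.exists_min_image Finset.univ (dglScore T ν)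
      ⟨⟨0, hM⟩, Finset.mem_univ _⟩
    exact ⟨i, Finset.mem_filter.mpr ⟨Finset.mem_univ _, fun j => hi j (Finset.mem_univ _)⟩⟩)

/-- The discrete measure on `𝒳` whose mass at `a` is `P a`. -/
noncomputable def measOf {𝒳 : Type*} [Fintype 𝒳] [MeasurableSpace 𝒳] (P : 𝒳 → ℝ) :
    Measure 𝒳 :=
  ∑ a, ENNReal.ofReal (P a) • Measure.dirac a

/-- The joint law of the DGL-based classification experiment on the sample space
`(training sequences) × (true hypothesis index) × (test sequence)`:
the `M` training sequences of length `N` are i.i.d. from `P 1, …, P M` respectively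
and mutually independent, the hypothesis index `J` is uniform on `Fin M` and
independent of the training data, and given `J = j` the test sequence of length `n`
is i.i.d. from `P j`. -/
noncomputable def classMeasure {𝒳 : Type*} [Fintype 𝒳] [MeasurableSpace 𝒳]
    {M N n : ℕ} (P : Fin M → 𝒳 → ℝ) :
    Measure ((Fin M → Fin N → 𝒳) × Fin M × (Fin n → 𝒳)) :=
  (M : ENNReal)⁻¹ • ∑ j : Fin M,
    (Measure.pi fun i => Measure.pi fun _ : Fin N => measOf (P i)).prod
      ((Measure.dirac j).prod (Measure.pi fun _ : Fin n => measOf (P j)))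

/-- The classification-error event: the DGL test applied with the empirical training
distributions as nominal distributions outputs an index different from the true one. -/
def errEvent {𝒳 : Type*} [Fintype 𝒳] [DecidableEq 𝒳] {M N n : ℕ} (hM : 0 < M) :
    Set ((Fin M → Fin N → 𝒳) × Fin M × (Fin n → 𝒳)) :=
  {ω | dglClassify hM (fun i => empDist (ω.1 i)) (empDist ω.2.2) ≠ ω.2.1}

/-!
If the DGL classifier outputs `i` while the true index is `j ≠ i`, then Scheffé's identity
`V(P, Q) = P(A) - Q(A)` for `A = {Q ≤ P}`, together with the minimality of the score of `i`, gives
`V(T_i, T_j) ≤ 2 V(T_j, μ_n)`, whence by the triangle inequality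
`V(P_i, P_j) ≤ V(T_i, P_i) + 3 V(T_j, P_j) + 2 V(μ_n, P_j)`.
So an error forces a training deviation `V(T_k, P_k) ≥ ε₁` or a test deviation
`V(μ_n, P_j) ≥ ε₂` as soon as `4 ε₁ + 2 ε₂ = min V(P_i, P_j)`.
By Scheffé's identity again, a deviation `V(T, Q) ≥ ε` of the empirical distribution of `m`
samples means `T(S) ≥ Q(S) + ε` for one of the `2^|𝒳|` sets `S`, each of probability at most
`exp (-2 m ε²)` by Hoeffding's inequality. The choice `ε₂ = √α ε₁` balances the exponents
`2 N ε₁² = 2 n ε₂²`, and a union bound over the `M + 1` deviation events concludes.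
-/

open Finset

section TotalVariation

variable {𝒳 : Type*} [Fintype 𝒳]

lemma tvDist_nonneg (P Q : 𝒳 → ℝ) : 0 ≤ tvDist P Q := by
  unfold tvDist
  positivity

lemma tvDist_comm (P Q : 𝒳 → ℝ) : tvDist P Q = tvDist Q P := by
  simp only [tvDist, abs_sub_comm]

lemma tvDist_triangle (P Q R : 𝒳 → ℝ) : tvDist P R ≤ tvDist P Q + tvDist Q R := by
  simp only [tvDist, ← mul_add, ← sum_add_distrib]
  gcongr with a
  exact abs_sub_le _ _ _

lemma abs_sum_sub_sum_le_tvDist {P Q : 𝒳 → ℝ} (h : ∑ a, P a = ∑ a, Q a) (S : Finset 𝒳) :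
    |∑ a ∈ S, P a - ∑ a ∈ S, Q a| ≤ tvDist P Q := by
  classical
  have hcompl : ∑ a ∈ Sᶜ, (P a - Q a) = -∑ a ∈ S, (P a - Q a) := by
    rw [eq_neg_iff_add_eq_zero, add_comm, sum_add_sum_compl, sum_sub_distrib, h, sub_self]
  have hS := abs_sum_le_sum_abs (fun a => P a - Q a) S
  have hSc := abs_sum_le_sum_abs (fun a => P a - Q a) Sᶜ
  rw [hcompl, abs_neg] at hSc
  rw [← sum_sub_distrib, tvDist, ← sum_add_sum_compl S]
  linarith

lemma sum_filter_sub_eq_tvDist {P Q : 𝒳 → ℝ} (h : ∑ a, P a = ∑ a, Q a) :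
    ∑ a ∈ univ.filter (fun a => Q a ≤ P a), (P a - Q a) = tvDist P Q := by
  have habs : ∀ a, |P a - Q a| = 2 * (if Q a ≤ P a then P a - Q a else 0) - (P a - Q a) := by
    intro a
    split_ifs with hle
    · rw [abs_of_nonneg (sub_nonneg.2 hle)]; ring
    · rw [abs_of_neg (sub_neg.2 (not_le.1 hle))]; ring
  rw [sum_filter, tvDist]
  simp only [habs, sum_sub_distrib, ← mul_sum, h, sub_self]
  ring

lemma minPairTV_nonneg {M : ℕ} (P : Fin M → 𝒳 → ℝ) : 0 ≤ minPairTV P :=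
  Real.sInf_nonneg <| by rintro x ⟨i, j, -, rfl⟩; exact tvDist_nonneg _ _

lemma minPairTV_le {M : ℕ} (P : Fin M → 𝒳 → ℝ) {i j : Fin M} (hij : i ≠ j) :
    minPairTV P ≤ tvDist (P i) (P j) :=
  csInf_le ⟨0, by rintro x ⟨i, j, -, rfl⟩; exact tvDist_nonneg _ _⟩ ⟨i, j, hij, rfl⟩

end TotalVariation

section DGL

variable {𝒳 : Type*} [Fintype 𝒳] {M : ℕ} (T : Fin M → 𝒳 → ℝ) (ν : 𝒳 → ℝ)

/-- The set `A_{p,q}` of the DGL test. -/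
noncomputable def dglSet (p q : Fin M) : Finset 𝒳 :=
  univ.filter fun a => T q a ≤ T p a

lemma abs_sub_le_dglScore (i : Fin M) {p q : Fin M} (hpq : p < q) :
    |∑ a ∈ dglSet T p q, T i a - ∑ a ∈ dglSet T p q, ν a| ≤ dglScore T ν i := by
  refine le_csSup ?_ ⟨p, q, hpq, rfl⟩
  refine ((Set.finite_range fun pq : Fin M × Fin M =>
    |∑ a ∈ dglSet T pq.1 pq.2, T i a - ∑ a ∈ dglSet T pq.1 pq.2, ν a|).subset ?_).bddAbove
  rintro x ⟨p, q, -, rfl⟩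
  exact ⟨(p, q), rfl⟩

lemma dglScore_le_tvDist {i : Fin M} (h : ∑ a, T i a = ∑ a, ν a) :
    dglScore T ν i ≤ tvDist (T i) ν :=
  Real.sSup_le (by rintro x ⟨p, q, -, rfl⟩; exact abs_sum_sub_sum_le_tvDist h _)
    (tvDist_nonneg _ _)

lemma exists_dglSet_abs_sub_eq_tvDist {i j : Fin M} (hij : i ≠ j)
    (h : ∑ a, T i a = ∑ a, T j a) :
    ∃ p q, p < q ∧
      |∑ a ∈ dglSet T p q, T i a - ∑ a ∈ dglSet T p q, T j a| = tvDist (T i) (T j) := by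
  rcases hij.lt_or_gt with hlt | hgt
  · refine ⟨i, j, hlt, ?_⟩
    rw [← sum_sub_distrib, dglSet, sum_filter_sub_eq_tvDist h,
      abs_of_nonneg (tvDist_nonneg _ _)]
  · refine ⟨j, i, hgt, ?_⟩
    rw [abs_sub_comm, ← sum_sub_distrib, dglSet, sum_filter_sub_eq_tvDist h.symm,
      abs_of_nonneg (tvDist_nonneg _ _), tvDist_comm]

lemma dglScore_dglClassify_le (hM : 0 < M) (j : Fin M) :
    dglScore T ν (dglClassify hM T ν) ≤ dglScore T ν j :=
  (mem_filter.1 (min'_mem (univ.filter fun i => ∀ k, dglScore T ν i ≤ dglScore T ν k) _)).2 j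

lemma tvDist_le_of_dglScore_le (hT : ∀ k, ∑ a, T k a = ∑ a, ν a) {i j : Fin M} (hij : i ≠ j)
    (hscore : dglScore T ν i ≤ dglScore T ν j) :
    tvDist (T i) (T j) ≤ 2 * tvDist (T j) ν := by
  obtain ⟨p, q, hpq, hF⟩ := exists_dglSet_abs_sub_eq_tvDist T hij ((hT i).trans (hT j).symm)
  set F := dglSet T p q
  calc tvDist (T i) (T j) = |∑ a ∈ F, T i a - ∑ a ∈ F, T j a| := hF.symm
    _ ≤ |∑ a ∈ F, T i a - ∑ a ∈ F, ν a| + |∑ a ∈ F, T j a - ∑ a ∈ F, ν a| := by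
      rw [abs_sub_comm (∑ a ∈ F, T j a)]
      exact abs_sub_le _ _ _
    _ ≤ dglScore T ν j + tvDist (T j) ν :=
      add_le_add ((abs_sub_le_dglScore T ν i hpq).trans hscore)
        (abs_sum_sub_sum_le_tvDist (hT j) F)
    _ ≤ 2 * tvDist (T j) ν := by linarith [dglScore_le_tvDist T ν (hT j)]

lemma dglClassify_eq_of_tvDist_lt (hM : 0 < M) (hT : ∀ k, ∑ a, T k a = ∑ a, ν a)
    {P : Fin M → 𝒳 → ℝ} {j : Fin M} {ε₁ ε₂ : ℝ} (hε : 4 * ε₁ + 2 * ε₂ ≤ minPairTV P)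
    (hTP : ∀ k, tvDist (T k) (P k) < ε₁) (hνP : tvDist ν (P j) < ε₂) :
    dglClassify hM T ν = j := by
  by_contra hne
  set i := dglClassify hM T ν
  have hTT := tvDist_le_of_dglScore_le T ν hT hne (dglScore_dglClassify_le T ν hM j)
  have hPP := minPairTV_le P hne
  have h₁ := tvDist_triangle (P i) (T i) (P j)
  have h₂ := tvDist_triangle (T i) (T j) (P j)
  have h₃ := tvDist_triangle (T j) (P j) ν
  linarith [hTP i, hTP j, tvDist_comm (P i) (T i), tvDist_comm (P j) ν]

end DGL

section Empirical

variable {𝒳 : Type*} [Fintype 𝒳] [DecidableEq 𝒳] {m : ℕ}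

lemma sum_empDist_eq (x : Fin m → 𝒳) (S : Finset 𝒳) :
    ∑ a ∈ S, empDist x a = (∑ k, (S : Set 𝒳).indicator 1 (x k)) / m := by
  simp only [empDist, ← sum_div, card_filter, Nat.cast_sum]
  rw [sum_comm]
  congr 1
  refine sum_congr rfl fun k _ => ?_
  simp [Set.indicator_apply, eq_comm]

lemma sum_empDist_s13 (hm : 0 < m) (x : Fin m → 𝒳) : ∑ a, empDist x a = 1 := by
  rw [sum_empDist_eq, coe_univ, Set.indicator_univ]
  simp only [Pi.one_apply, sum_const, card_univ, Fintype.card_fin, nsmul_eq_mul, mul_one]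
  exact div_self (Nat.cast_ne_zero.2 hm.ne')

variable [MeasurableSpace 𝒳] [MeasurableSingletonClass 𝒳] (μ : Measure 𝒳) [IsProbabilityMeasure μ]

lemma measureReal_sum_empDist_ge_le (hm : 0 < m) (S : Finset 𝒳) {ε : ℝ} (hε : 0 ≤ ε) :
    (Measure.pi fun _ : Fin m => μ).real {x | μ.real S + ε ≤ ∑ a ∈ S, empDist x a} ≤
      Real.exp (-(2 * m * ε ^ 2)) := by
  set f : 𝒳 → ℝ := (S : Set 𝒳).indicator 1
  have hf : μ[f] = μ.real S := integral_indicator_one S.measurableSet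
  have hsubG : ∀ k : Fin m, HasSubgaussianMGF (fun x : Fin m → 𝒳 => f (x k) - μ.real S)
      ((‖(1 : ℝ) - 0‖₊ / 2) ^ 2) (Measure.pi fun _ : Fin m => μ) := by
    intro k
    have h := hasSubgaussianMGF_of_mem_Icc (μ := μ) (X := f) (a := 0) (b := 1)
      Measurable.of_discrete.aemeasurable
      (ae_of_all _ fun a => by by_cases ha : a ∈ (S : Set 𝒳) <;> simp [f, ha])
    rw [hf] at h
    exact HasSubgaussianMGF.of_map (Y := Function.eval k) (measurable_pi_apply k).aemeasurable
      (by rwa [(measurePreserving_eval (fun _ : Fin m => μ) k).map_eq])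
  have hindep := iIndepFun_pi (μ := fun _ : Fin m => μ)
    (X := fun _ a => f a - μ.real S) fun _ => Measurable.of_discrete.aemeasurable
  have hHoeffding := HasSubgaussianMGF.measure_sum_ge_le_of_iIndepFun hindep (s := univ)
    (fun k _ => hsubG k) (ε := m * ε) (by positivity)
  have hm' : (0 : ℝ) < m := Nat.cast_pos.2 hm
  convert hHoeffding using 2
  · ext x
    simp only [Set.mem_ofPred_eq, sum_empDist_eq, le_div_iff₀ hm', sum_sub_distrib, sum_const,
      card_univ, Fintype.card_fin, nsmul_eq_mul]
    constructor <;> intro h <;> linarith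
  · simp only [sub_zero, nnnorm_one, one_div, inv_pow, sum_const, card_univ, Fintype.card_fin,
      nsmul_eq_mul, NNReal.coe_mul, NNReal.coe_natCast, NNReal.coe_inv, NNReal.coe_pow,
      NNReal.coe_ofNat]
    field_simp

lemma measureReal_tvDist_empDist_ge_le (hm : 0 < m) {ε : ℝ} (hε : 0 ≤ ε) :
    (Measure.pi fun _ : Fin m => μ).real {x | ε ≤ tvDist (empDist x) fun a => μ.real {a}} ≤
      2 ^ Fintype.card 𝒳 * Real.exp (-(2 * m * ε ^ 2)) := by
  have hsum : ∀ x : Fin m → 𝒳, ∑ a, empDist x a = ∑ a, μ.real {a} := fun x => by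
    rw [sum_empDist_s13 hm, sum_measureReal_singleton, coe_univ, probReal_univ]
  have hsub : {x : Fin m → 𝒳 | ε ≤ tvDist (empDist x) fun a => μ.real {a}} ⊆
      ⋃ S : Finset 𝒳, {x | μ.real S + ε ≤ ∑ a ∈ S, empDist x a} := by
    intro x hx
    refine Set.mem_iUnion.2 ⟨univ.filter fun a => μ.real {a} ≤ empDist x a, ?_⟩
    have hScheffe := sum_filter_sub_eq_tvDist (hsum x)
    rw [sum_sub_distrib, sum_measureReal_singleton] at hScheffe
    simp only [Set.mem_ofPred_eq] at hx ⊢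
    linarith
  calc _ ≤ ∑ S : Finset 𝒳, (Measure.pi fun _ : Fin m => μ).real
        {x | μ.real S + ε ≤ ∑ a ∈ S, empDist x a} :=
      (measureReal_mono hsub).trans (measureReal_iUnion_fintype_le _)
    _ ≤ ∑ _S : Finset 𝒳, Real.exp (-(2 * m * ε ^ 2)) :=
      sum_le_sum fun S _ => measureReal_sum_empDist_ge_le μ hm S hε
    _ = 2 ^ Fintype.card 𝒳 * Real.exp (-(2 * m * ε ^ 2)) := by
      rw [sum_const, card_univ, Fintype.card_finset, nsmul_eq_mul, Nat.cast_pow, Nat.cast_two]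

end Empirical

section Experiment

variable {𝒳 : Type*} [Fintype 𝒳] [MeasurableSpace 𝒳]

lemma isProbabilityMeasure_measOf {Q : 𝒳 → ℝ} (hQ0 : ∀ a, 0 ≤ Q a) (hQ1 : ∑ a, Q a = 1) :
    IsProbabilityMeasure (measOf Q) := by
  constructor
  simp [measOf, ← ENNReal.ofReal_sum_of_nonneg fun a _ => hQ0 a, hQ1]

variable [MeasurableSingletonClass 𝒳]

lemma measOf_singleton (Q : 𝒳 → ℝ) (a : 𝒳) : measOf Q {a} = ENNReal.ofReal (Q a) := by
  classical
  simp [measOf, Set.indicator_apply]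

lemma measure_tvDist_empDist_ge_le [DecidableEq 𝒳] {Q : 𝒳 → ℝ} (hQ0 : ∀ a, 0 ≤ Q a)
    (hQ1 : ∑ a, Q a = 1) {m : ℕ} (hm : 0 < m) {ε : ℝ} (hε : 0 ≤ ε) :
    (Measure.pi fun _ : Fin m => measOf Q) {x | ε ≤ tvDist (empDist x) Q} ≤
      ENNReal.ofReal (2 ^ Fintype.card 𝒳 * Real.exp (-(2 * m * ε ^ 2))) := by
  have := isProbabilityMeasure_measOf hQ0 hQ1
  have hQ : (fun a => (measOf Q).real {a}) = Q := funext fun a => by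
    rw [measureReal_def, measOf_singleton, ENNReal.toReal_ofReal (hQ0 a)]
  have hbound := measureReal_tvDist_empDist_ge_le (measOf Q) hm hε
  rw [hQ] at hbound
  rw [← ofReal_measureReal]
  exact ENNReal.ofReal_le_ofReal hbound

end Experiment

lemma prod_dirac_prod_apply_le {α β γ : Type*} [MeasurableSpace α] [MeasurableSpace β]
    [MeasurableSpace γ] [MeasurableSingletonClass γ] (μ : Measure α) (ν : Measure β)
    [IsProbabilityMeasure μ] [IsProbabilityMeasure ν] (c : γ) {E : Set (α × γ × β)}
    {A : Set α} {B : Set β} (hE : ∀ a b, (a, c, b) ∈ E → a ∈ A ∨ b ∈ B) :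
    μ.prod ((Measure.dirac c).prod ν) E ≤ μ A + ν B := by
  have hsub : E ⊆ A ×ˢ Set.univ ∪ (Set.univ ×ˢ (Set.univ ×ˢ B) ∪
      Set.univ ×ˢ (({c}ᶜ : Set γ) ×ˢ Set.univ)) := by
    rintro ⟨a, c', b⟩ h
    by_cases hc : c' = c
    · subst hc
      rcases hE a b h with ha | hb
      · exact Or.inl ⟨ha, trivial⟩
      · exact Or.inr (Or.inl ⟨trivial, trivial, hb⟩)
    · exact Or.inr (Or.inr ⟨trivial, hc, trivial⟩)
  calc _ ≤ _ := measure_mono hsub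
    _ ≤ _ := (measure_union_le _ _).trans (add_le_add le_rfl (measure_union_le _ _))
    _ = μ A + ν B := by
      simp [Measure.prod_prod]

section Classification

variable {𝒳 : Type*} [Fintype 𝒳] [DecidableEq 𝒳] [MeasurableSpace 𝒳]
  [MeasurableSingletonClass 𝒳]

lemma classMeasure_errEvent_le {M N n : ℕ} (hM : 0 < M) (hN : 0 < N) (hn : 0 < n)
    {P : Fin M → 𝒳 → ℝ} (hP0 : ∀ i a, 0 ≤ P i a) (hP1 : ∀ i, ∑ a, P i a = 1)
    {ε₁ ε₂ : ℝ} (hε : 4 * ε₁ + 2 * ε₂ ≤ minPairTV P) {Z : ENNReal}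
    (htrain : ∀ i, (Measure.pi fun _ : Fin N => measOf (P i))
      {t | ε₁ ≤ tvDist (empDist t) (P i)} ≤ Z)
    (htest : ∀ j, (Measure.pi fun _ : Fin n => measOf (P j))
      {y | ε₂ ≤ tvDist (empDist y) (P j)} ≤ Z) :
    classMeasure (N := N) (n := n) P (errEvent hM) ≤ (M + 1) * Z := by
  have := fun i => isProbabilityMeasure_measOf (hP0 i) (hP1 i)
  have hj : ∀ j : Fin M, (Measure.pi fun i => Measure.pi fun _ : Fin N => measOf (P i)).prod
      ((Measure.dirac j).prod (Measure.pi fun _ : Fin n => measOf (P j))) (errEvent hM) ≤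
        M * Z + Z := by
    intro j
    refine (prod_dirac_prod_apply_le _ _ j
      (A := ⋃ i, {t | ε₁ ≤ tvDist (empDist (t i)) (P i)}) ?_).trans (add_le_add ?_ (htest j))
    · intro t y hty
      by_contra! h
      simp only [Set.mem_iUnion, Set.mem_ofPred_eq, not_exists, not_le] at h
      exact hty (dglClassify_eq_of_tvDist_lt _ _ hM
        (fun i => (sum_empDist_s13 hN _).trans (sum_empDist_s13 hn y).symm) hε h.1 h.2)
    · calc _ ≤ ∑ i, (Measure.pi fun i => Measure.pi fun _ : Fin N => measOf (P i))
            (Function.eval i ⁻¹' {t | ε₁ ≤ tvDist (empDist t) (P i)}) :=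
          measure_iUnion_fintype_le _ _
        _ ≤ ∑ _i : Fin M, Z := sum_le_sum fun i _ => by
          rw [(measurePreserving_eval _ i).measure_preimage
            (Set.toFinite _).measurableSet.nullMeasurableSet]
          exact htrain i
        _ = M * Z := by simp
  rw [classMeasure, Measure.smul_apply, Measure.finsetSum_apply, smul_eq_mul]
  calc _ ≤ (M : ENNReal)⁻¹ * ∑ _j : Fin M, (M * Z + Z) := by gcongr with j; exact hj j
    _ = (M + 1) * Z := by
      rw [sum_const, card_univ, Fintype.card_fin, nsmul_eq_mul, ← mul_assoc,
        ENNReal.inv_mul_cancel (Nat.cast_ne_zero.2 hM.ne') (ENNReal.natCast_ne_top M), one_mul,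
        add_mul, one_mul]

end Classification

lemma two_pow_mul_exp_le {n : ℕ} (hn : 0 < n) (D : ℕ) (A x : ℝ) :
    2 ^ D * Real.exp (-(n * A)) ≤ Real.exp (-n * (A - max x (D * Real.log 2 / n))) := by
  have hn' : (0 : ℝ) < n := Nat.cast_pos.2 hn
  have hD : D * Real.log 2 ≤ n * max x (D * Real.log 2 / n) :=
    (div_le_iff₀' hn').1 (le_max_right _ _)
  calc (2 : ℝ) ^ D * Real.exp (-(n * A)) = Real.exp (D * Real.log 2 - n * A) := by
        rw [Real.exp_sub, Real.exp_nat_mul, Real.exp_log two_pos, Real.exp_neg, div_eq_mul_inv]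
    _ ≤ _ := Real.exp_le_exp.2 (by nlinarith)

theorem stmt_13 {𝒳 : Type*} [Fintype 𝒳] [DecidableEq 𝒳] [MeasurableSpace 𝒳]
    [MeasurableSingletonClass 𝒳]
    {M : ℕ} (hM : 2 ≤ M)
    (P : Fin M → 𝒳 → ℝ) (hP0 : ∀ i a, 0 ≤ P i a) (hP1 : ∀ i, ∑ a, P i a = 1)
    {n N : ℕ} (hn : 0 < n) (hN : 0 < N) (α : ℝ) (hα : 0 < α)
    (hNnα : (N : ℝ) = n * α) :
    ((classMeasure (N := N) (n := n) P)
        (errEvent (𝒳 := 𝒳) (by omega : 0 < M))).toReal ≤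
      2 * M * Real.exp (-(n : ℝ) *
        (α * minPairTV P ^ 2 / (2 * (2 + Real.sqrt α) ^ 2) -
          max (2 * Real.log ((M : ℝ) - 1) / n)
            ((Fintype.card 𝒳 : ℝ) * Real.log 2 / n))) := by
  set V := minPairTV P
  set A := α * V ^ 2 / (2 * (2 + Real.sqrt α) ^ 2) with hA
  have hV : 0 ≤ V := minPairTV_nonneg P
  set ε₁ := V / (2 * (2 + Real.sqrt α)) with hε₁
  set ε₂ := Real.sqrt α * ε₁ with hε₂
  have hε : 4 * ε₁ + 2 * ε₂ = V := by rw [hε₂, hε₁]; field_simp; ring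
  have h₁ : 2 * N * ε₁ ^ 2 = n * A := by rw [hNnα, hε₁, hA]; field_simp
  have h₂ : 2 * n * ε₂ ^ 2 = n * A := by
    rw [hε₂, mul_pow, Real.sq_sqrt hα.le, hε₁, hA]; field_simp
  refine ENNReal.toReal_le_of_le_ofReal (by positivity) ?_
  calc _ ≤ (M + 1) * ENNReal.ofReal (2 ^ Fintype.card 𝒳 * Real.exp (-(n * A))) :=
        classMeasure_errEvent_le _ hN hn hP0 hP1 hε.le
          (fun i => h₁ ▸ measure_tvDist_empDist_ge_le (hP0 i) (hP1 i) hN (by positivity))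
          (fun j => h₂ ▸ measure_tvDist_empDist_ge_le (hP0 j) (hP1 j) hn (by positivity))
    _ ≤ ENNReal.ofReal (2 * M * Real.exp (-n * (A - max (2 * Real.log ((M : ℝ) - 1) / n)
          ((Fintype.card 𝒳 : ℝ) * Real.log 2 / n)))) := by
      rw [← ENNReal.ofReal_natCast, ← ENNReal.ofReal_one, ← ENNReal.ofReal_add (by positivity)
        zero_le_one, ← ENNReal.ofReal_mul (by positivity)]
      refine ENNReal.ofReal_le_ofReal (mul_le_mul (by norm_cast; omega)
        (two_pow_mul_exp_le hn _ _ _) (by positivity) (by positivity))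
end
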